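/- arXiv:1811.04168 — 3 statements merged into one kernel-verified Lean document; each statement's English description precedes it below -/
import Mathlib

section
/- Let Ω be a finite set with fixed-point-free involutions s₁, s₂, and let G act on Ω commuting with s₁ and s₂ (i.e., G acts by automorphisms of the coloured flag graph). Suppose an orbit O of ⟨s₁,s₂⟩ on Ω meets exactly two G-orbit classes A and B, with Φ·s₁ ∈ A for all Φ ∈ O∩A, Φ·s₁ ∈ B for all Φ ∈ O∩B, and s₂ exchanging A∩O and B∩O. Then |O| is divisible by 4, i.e., |O| = 4n for some n ≥ 1. -/
/-! `s₁` restricts to a fixed-point-free involution of `O ∩ A`, so `|O ∩ A|` is even, and `s₂`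
matches `O ∩ A` with `O ∩ B`. Since the `G`-orbits `A` and `B` are disjoint and cover `O`,
`|O| = 2 |O ∩ A|` is a positive multiple of `4`. -/

open Function Set

theorem Equiv.Perm.two_dvd_card_of_sq_eq_one {α : Type*} [Fintype α] {σ : Equiv.Perm α}
    (hσ : σ ^ 2 = 1) (hfix : ∀ x, σ x ≠ x) : 2 ∣ Fintype.card α := by
  classical
  have hsupp : σ.support = Finset.univ := by
    ext x
    simpa using hfix x
  simpa [hsupp] using σ.two_dvd_card_support hσ

theorem Function.Involutive.two_dvd_ncard_of_mapsTo {α : Type*} [Finite α] {f : α → α}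
    (hf : Involutive f) (hfix : ∀ x, f x ≠ x) {s : Set α} (hs : MapsTo f s s) :
    2 ∣ s.ncard := by
  have hrestrict : Involutive (hs.restrict f s s) := fun x => Subtype.ext (hf x)
  have := Fintype.ofFinite s
  rw [← Nat.card_coe_set_eq, Nat.card_eq_fintype_card]
  refine Equiv.Perm.two_dvd_card_of_sq_eq_one (σ := hrestrict.toPerm) ?_ fun x hx => ?_
  · ext x
    exact congrArg Subtype.val (hrestrict x)
  · exact hfix x (congrArg Subtype.val hx)

theorem Set.ncard_eq_of_mapsTo_of_mapsTo {α : Type*} {s t : Set α} {f : α → α}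
    (hf : Injective f) (hst : MapsTo f s t) (hts : MapsTo f t s)
    (hs : s.Finite := by toFinite_tac) (ht : t.Finite := by toFinite_tac) :
    s.ncard = t.ncard :=
  le_antisymm (ncard_le_ncard_of_injOn f hst hf.injOn ht)
    (ncard_le_ncard_of_injOn f hts hf.injOn hs)

theorem Set.ncard_eq_ncard_inter_add_ncard_inter {α : Type*} {s t u : Set α}
    (hcover : s ⊆ t ∪ u) (hdisj : Disjoint t u) (hs : s.Finite := by toFinite_tac) :
    s.ncard = (s ∩ t).ncard + (s ∩ u).ncard := by
  rw [← ncard_union_eq (hdisj.inter_left' s |>.inter_right' s) (hs.inter_of_left t)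
    (hs.inter_of_left u), ← inter_union_distrib_left, inter_eq_left.mpr hcover]

theorem MulAction.mapsTo_orbit_of_mem {α : Type*} {H : Subgroup (Equiv.Perm α)}
    {σ : Equiv.Perm α} (hσ : σ ∈ H) (x : α) :
    MapsTo σ (orbit H x) (orbit H x) :=
  fun _ hy => mem_orbit_of_mem_orbit (⟨σ, hσ⟩ : H) hy

theorem stmt_3_general (Ω : Type*) [Fintype Ω] (s₁ s₂ : Equiv.Perm Ω)
    (h1inv : ∀ x, s₁ (s₁ x) = x)
    (h1f : ∀ x, s₁ x ≠ x)
    (G : Type*) [Group G] [MulAction G Ω]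
    (Φ₀ : Ω) (O : Set Ω)
    (hO : O = (MulAction.orbit (Subgroup.closure ({s₁, s₂} : Set (Equiv.Perm Ω))) Φ₀ : Set Ω))
    (A B : Set Ω)
    (hA : ∃ a, A = MulAction.orbit G a) (hB : ∃ b, B = MulAction.orbit G b)
    (hAB : A ≠ B)
    (hcover : O ⊆ A ∪ B) (hOA : (O ∩ A).Nonempty)
    (h1A : ∀ Φ ∈ O ∩ A, s₁ Φ ∈ A)
    (h2A : ∀ Φ ∈ O ∩ A, s₂ Φ ∈ B) (h2B : ∀ Φ ∈ O ∩ B, s₂ Φ ∈ A) :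
    ∃ n : ℕ, 1 ≤ n ∧ Nat.card O = 4 * n := by
  have hdisj : Disjoint A B := by
    obtain ⟨a, rfl⟩ := hA
    obtain ⟨b, rfl⟩ := hB
    exact (MulAction.orbit.eq_or_disjoint a b).resolve_left hAB
  have hO₁ : MapsTo s₁ O O :=
    hO ▸ MulAction.mapsTo_orbit_of_mem (Subgroup.subset_closure (by simp)) Φ₀
  have hO₂ : MapsTo s₂ O O :=
    hO ▸ MulAction.mapsTo_orbit_of_mem (Subgroup.subset_closure (by simp)) Φ₀
  obtain ⟨k, hk⟩ : 2 ∣ (O ∩ A).ncard :=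
    Involutive.two_dvd_ncard_of_mapsTo h1inv h1f fun x hx => ⟨hO₁ hx.1, h1A x hx⟩
  have hAB_card : (O ∩ A).ncard = (O ∩ B).ncard :=
    ncard_eq_of_mapsTo_of_mapsTo s₂.injective (fun x hx => ⟨hO₂ hx.1, h2A x hx⟩)
      fun x hx => ⟨hO₂ hx.1, h2B x hx⟩
  have hsplit : Nat.card O = (O ∩ A).ncard + (O ∩ B).ncard := by
    rw [Nat.card_coe_set_eq]
    exact ncard_eq_ncard_inter_add_ncard_inter hcover hdisj
  have hpos : 0 < (O ∩ A).ncard := (ncard_pos (toFinite _)).mpr hOA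
  exact ⟨k, by omega, by omega⟩

theorem stmt_3 (Ω : Type*) [Fintype Ω] (s₁ s₂ : Equiv.Perm Ω)
    (h1inv : ∀ x, s₁ (s₁ x) = x) (h2inv : ∀ x, s₂ (s₂ x) = x)
    (h1f : ∀ x, s₁ x ≠ x) (h2f : ∀ x, s₂ x ≠ x)
    (G : Type*) [Group G] [MulAction G Ω]
    (hc1 : ∀ (g : G) (x : Ω), s₁ (g • x) = g • s₁ x)
    (hc2 : ∀ (g : G) (x : Ω), s₂ (g • x) = g • s₂ x)
    (Φ₀ : Ω) (O : Set Ω)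
    (hO : O = (MulAction.orbit (Subgroup.closure ({s₁, s₂} : Set (Equiv.Perm Ω))) Φ₀ : Set Ω))
    (A B : Set Ω)
    (hA : ∃ a, A = MulAction.orbit G a) (hB : ∃ b, B = MulAction.orbit G b)
    (hAB : A ≠ B)
    (hcover : O ⊆ A ∪ B) (hOA : (O ∩ A).Nonempty) (hOB : (O ∩ B).Nonempty)
    (h1A : ∀ Φ ∈ O ∩ A, s₁ Φ ∈ A) (h1B : ∀ Φ ∈ O ∩ B, s₁ Φ ∈ B)
    (h2A : ∀ Φ ∈ O ∩ A, s₂ Φ ∈ B) (h2B : ∀ Φ ∈ O ∩ B, s₂ Φ ∈ A) :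
    ∃ n : ℕ, 1 ≤ n ∧ Nat.card O = 4 * n :=
  stmt_3_general Ω s₁ s₂ h1inv h1f G Φ₀ O hO A B hA hB hAB hcover hOA h1A h2A h2B
end

section
/- Let Ω be a finite set with fixed-point-free involutions s₀, s₁, and let G act on Ω commuting with s₀ and s₁. Suppose an orbit O of ⟨s₀,s₁⟩ meets exactly two G-orbit classes A and B, with s₀ fixing A∩O setwise and fixing B∩O setwise (semi-edges of colour 0 at both classes), and s₁ exchanging A∩O and B∩O. Then |O| is divisible by 4. -/
/-! The G-orbits are disjoint, so `O` splits into `O ∩ A` and `O ∩ B`. The involution `s₁` swaps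
the two parts, so they have the same size, and `s₀` pairs off the points of `O ∩ A`, so that size
is even. -/

open Function Set MulAction

theorem Set.two_dvd_ncard_of_mapsTo_involutive {α : Type*} [Finite α] {f : α → α} {s : Set α}
    (hf : Involutive f) (hfix : ∀ x ∈ s, f x ≠ x) (hs : MapsTo f s s) : 2 ∣ s.ncard := by
  classical
  have : Fintype α := Fintype.ofFinite α
  let σ : Equiv.Perm s := Involutive.toPerm (hs.restrict f s s) fun x => Subtype.ext (hf x)
  have hσ : σ ^ 2 = 1 := Equiv.ext fun x => Subtype.ext (hf x)
  have hsupport : σ.support = Finset.univ := Finset.eq_univ_of_forall fun x =>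
    Equiv.Perm.mem_support.2 fun h => hfix x x.2 (congrArg Subtype.val h)
  simpa [hsupport, Set.ncard_eq_toFinset_card'] using Equiv.Perm.two_dvd_card_support hσ

theorem Set.four_dvd_ncard_union {α : Type*} [Finite α] {f g : α → α} {s t : Set α}
    (hst : Disjoint s t) (hf : Involutive f) (hfix : ∀ x ∈ s, f x ≠ x) (hfs : MapsTo f s s)
    (hg : Involutive g) (hgs : MapsTo g s t) (hgt : MapsTo g t s) : 4 ∣ (s ∪ t).ncard := by
  have hcard : s.ncard = t.ncard :=
    (InvOn.bijOn ⟨fun x _ => hg x, fun x _ => hg x⟩ hgs hgt).ncard_eq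
  obtain ⟨k, hk⟩ := two_dvd_ncard_of_mapsTo_involutive hf hfix hfs
  exact ⟨k, by rw [ncard_union_eq hst, ← hcard, hk]; ring⟩

theorem stmt_12_general (Ω : Type*) [Fintype Ω] (s₀ s₁ : Equiv.Perm Ω)
    (h0inv : ∀ x, s₀ (s₀ x) = x) (h1inv : ∀ x, s₁ (s₁ x) = x)
    (h0f : ∀ x, s₀ x ≠ x)
    (G : Type*) [Group G] [MulAction G Ω]
    (Φ₀ : Ω) (O : Set Ω)
    (hO : O = (MulAction.orbit (Subgroup.closure ({s₀, s₁} : Set (Equiv.Perm Ω))) Φ₀ : Set Ω))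
    (A B : Set Ω)
    (hA : ∃ a, A = MulAction.orbit G a) (hB : ∃ b, B = MulAction.orbit G b)
    (hAB : A ≠ B)
    (hcover : O ⊆ A ∪ B)
    -- s₀ fixes A∩O and B∩O setwise (semi-edges of colour 0 at both classes):
    (h0A : ∀ Φ ∈ O ∩ A, s₀ Φ ∈ A)
    -- s₁ exchanges A∩O and B∩O:
    (h1A : ∀ Φ ∈ O ∩ A, s₁ Φ ∈ B) (h1B : ∀ Φ ∈ O ∩ B, s₁ Φ ∈ A) :
    4 ∣ Nat.card O := by
  obtain ⟨a, rfl⟩ := hA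
  obtain ⟨b, rfl⟩ := hB
  have hdisj : Disjoint (orbit G a) (orbit G b) := (orbit.eq_or_disjoint a b).resolve_left hAB
  have hstable : ∀ t ∈ Subgroup.closure ({s₀, s₁} : Set (Equiv.Perm Ω)), MapsTo t O O := by
    subst hO
    exact fun t ht x hx => mem_orbit_of_mem_orbit (⟨t, ht⟩ : Subgroup.closure _) hx
  have hs₀ := hstable s₀ (Subgroup.subset_closure (by simp))
  have hs₁ := hstable s₁ (Subgroup.subset_closure (by simp))
  rw [Nat.card_coe_set_eq, ← inter_eq_left.2 hcover, inter_union_distrib_left]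
  exact four_dvd_ncard_union (hdisj.mono inter_subset_right inter_subset_right)
    h0inv (fun x _ => h0f x) (fun x hx => ⟨hs₀ hx.1, h0A x hx⟩)
    h1inv (fun x hx => ⟨hs₁ hx.1, h1A x hx⟩) (fun x hx => ⟨hs₁ hx.1, h1B x hx⟩)

theorem stmt_12 (Ω : Type*) [Fintype Ω] (s₀ s₁ : Equiv.Perm Ω)
    (h0inv : ∀ x, s₀ (s₀ x) = x) (h1inv : ∀ x, s₁ (s₁ x) = x)
    (h0f : ∀ x, s₀ x ≠ x) (h1f : ∀ x, s₁ x ≠ x)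
    (G : Type*) [Group G] [MulAction G Ω]
    (hc0 : ∀ (g : G) (x : Ω), s₀ (g • x) = g • s₀ x)
    (hc1 : ∀ (g : G) (x : Ω), s₁ (g • x) = g • s₁ x)
    (Φ₀ : Ω) (O : Set Ω)
    (hO : O = (MulAction.orbit (Subgroup.closure ({s₀, s₁} : Set (Equiv.Perm Ω))) Φ₀ : Set Ω))
    (A B : Set Ω)
    (hA : ∃ a, A = MulAction.orbit G a) (hB : ∃ b, B = MulAction.orbit G b)
    (hAB : A ≠ B)
    (hcover : O ⊆ A ∪ B) (hOA : (O ∩ A).Nonempty) (hOB : (O ∩ B).Nonempty)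
    -- s₀ fixes A∩O and B∩O setwise (semi-edges of colour 0 at both classes):
    (h0A : ∀ Φ ∈ O ∩ A, s₀ Φ ∈ A) (h0B : ∀ Φ ∈ O ∩ B, s₀ Φ ∈ B)
    -- s₁ exchanges A∩O and B∩O:
    (h1A : ∀ Φ ∈ O ∩ A, s₁ Φ ∈ B) (h1B : ∀ Φ ∈ O ∩ B, s₁ Φ ∈ A) :
    4 ∣ Nat.card O :=
  stmt_12_general Ω s₀ s₁ h0inv h1inv h0f G Φ₀ O hO A B hA hB hAB hcover h0A h1A h1B
end

section
/- Let Ω be a finite set with fixed-point-free involutions s₁, s₂, and let G act on Ω commuting with s₁ and s₂. Suppose an orbit O of ⟨s₁,s₂⟩ meets exactly two G-orbit classes A and B, with s₁ fixing both A∩O and B∩O setwise, and s₂ exchanging A∩O and B∩O. Then every element Φ ∈ A∩O satisfies Φ·s₁ ∈ A and Φ·s₂ ∈ B, and |O| is divisible by 4. -/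
/-!
Distinct `G`-orbits are disjoint, so `O` is the disjoint union of `O ∩ A` and `O ∩ B`, and `s₂`,
being an involution exchanging the two pieces, matches them bijectively: `|O| = 2 |O ∩ A|`.
On `O ∩ A` the involution `s₁` has no fixed points, so its orbits pair up the elements and
`|O ∩ A|` is even.
-/

open Function Set MulAction

theorem Function.Involutive.two_dvd_natCard {α : Type*} [Finite α] {f : α → α}
    (hf : Involutive f) (hfix : ∀ x, f x ≠ x) : 2 ∣ Nat.card α := by
  classical
  have := Fintype.ofFinite α
  have hsupp : (hf.toPerm f).support = Finset.univ := by
    ext x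
    simpa using hfix x
  have hsq : hf.toPerm f ^ 2 = 1 := by
    ext x
    simp [sq, hf x]
  simpa [Nat.card_eq_fintype_card, hsupp] using Equiv.Perm.two_dvd_card_support hsq

theorem Set.two_dvd_ncard_of_involutive {α : Type*} [Finite α] {f : α → α} (hf : Involutive f)
    {s : Set α} (hs : MapsTo f s s) (hfix : ∀ x ∈ s, f x ≠ x) : 2 ∣ s.ncard := by
  rw [← Nat.card_coe_set_eq]
  refine Involutive.two_dvd_natCard (f := hs.restrict) (fun x => Subtype.ext (hf x)) ?_
  exact fun x h => hfix x x.2 (congrArg Subtype.val h)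

theorem Set.ncard_eq_two_mul_of_involutive_swap {α : Type*} [Finite α] {O A B : Set α}
    {e : α → α} (he : Involutive e) (hAB : Disjoint A B) (hcover : O ⊆ A ∪ B)
    (hA : MapsTo e (O ∩ A) (O ∩ B)) (hB : MapsTo e (O ∩ B) (O ∩ A)) :
    O.ncard = 2 * (O ∩ A).ncard := by
  have hsplit : O = O ∩ A ∪ O ∩ B := by
    rw [← inter_union_distrib_left, inter_eq_left.mpr hcover]
  have hswap : (O ∩ A).ncard = (O ∩ B).ncard :=
    (InvOn.bijOn ⟨he.leftInverse.leftInvOn _, he.leftInverse.leftInvOn _⟩ hA hB).ncard_eq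
  nth_rw 1 [hsplit]
  rw [ncard_union_eq (hAB.mono inter_subset_right inter_subset_right), ← hswap, two_mul]

theorem Equiv.Perm.apply_mem_orbit_of_mem {α : Type*} {H : Subgroup (Equiv.Perm α)}
    {s : Equiv.Perm α} (hs : s ∈ H) {x y : α} (hx : x ∈ orbit H y) : s x ∈ orbit H y := by
  rw [← orbit_eq_iff.mpr hx]
  exact mem_orbit x (⟨s, hs⟩ : H)

theorem stmt_13_general (Ω : Type*) [Fintype Ω] (s₁ s₂ : Equiv.Perm Ω)
    (h1inv : ∀ x, s₁ (s₁ x) = x) (h2inv : ∀ x, s₂ (s₂ x) = x)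
    (h1f : ∀ x, s₁ x ≠ x)
    (G : Type*) [Group G] [MulAction G Ω]
    (Φ₀ : Ω) (O : Set Ω)
    (hO : O = (MulAction.orbit (Subgroup.closure ({s₁, s₂} : Set (Equiv.Perm Ω))) Φ₀ : Set Ω))
    (A B : Set Ω)
    (hA : ∃ a, A = MulAction.orbit G a) (hB : ∃ b, B = MulAction.orbit G b)
    (hAB : A ≠ B)
    (hcover : O ⊆ A ∪ B)
    -- s₁ fixes both A∩O and B∩O setwise:
    (h1A : ∀ Φ ∈ O ∩ A, s₁ Φ ∈ A)
    -- s₂ exchanges A∩O and B∩O: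
    (h2A : ∀ Φ ∈ O ∩ A, s₂ Φ ∈ B) (h2B : ∀ Φ ∈ O ∩ B, s₂ Φ ∈ A) :
    (∀ Φ ∈ A ∩ O, s₁ Φ ∈ A ∧ s₂ Φ ∈ B) ∧ 4 ∣ Nat.card O := by
  obtain ⟨a, rfl⟩ := hA
  obtain ⟨b, rfl⟩ := hB
  have hdisj : Disjoint (orbit G a) (orbit G b) := (orbit.eq_or_disjoint a b).resolve_left hAB
  have hstable : ∀ s ∈ ({s₁, s₂} : Set (Equiv.Perm Ω)), MapsTo s O O := fun s hs x hx => by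
    subst hO
    exact Equiv.Perm.apply_mem_orbit_of_mem (Subgroup.subset_closure hs) hx
  refine ⟨fun Φ hΦ => ⟨h1A Φ ⟨hΦ.2, hΦ.1⟩, h2A Φ ⟨hΦ.2, hΦ.1⟩⟩, ?_⟩
  have hcard : O.ncard = 2 * (O ∩ orbit G a).ncard :=
    ncard_eq_two_mul_of_involutive_swap h2inv hdisj hcover
      (fun x hx => ⟨hstable s₂ (by simp) hx.1, h2A x hx⟩)
      (fun x hx => ⟨hstable s₂ (by simp) hx.1, h2B x hx⟩)
  have heven : 2 ∣ (O ∩ orbit G a).ncard :=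
    two_dvd_ncard_of_involutive h1inv (fun x hx => ⟨hstable s₁ (by simp) hx.1, h1A x hx⟩)
      (fun x _ => h1f x)
  rw [Nat.card_coe_set_eq, hcard]
  exact mul_dvd_mul_left 2 heven

theorem stmt_13 (Ω : Type*) [Fintype Ω] (s₁ s₂ : Equiv.Perm Ω)
    (h1inv : ∀ x, s₁ (s₁ x) = x) (h2inv : ∀ x, s₂ (s₂ x) = x)
    (h1f : ∀ x, s₁ x ≠ x) (h2f : ∀ x, s₂ x ≠ x)
    (G : Type*) [Group G] [MulAction G Ω]
    (hc1 : ∀ (g : G) (x : Ω), s₁ (g • x) = g • s₁ x)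
    (hc2 : ∀ (g : G) (x : Ω), s₂ (g • x) = g • s₂ x)
    (Φ₀ : Ω) (O : Set Ω)
    (hO : O = (MulAction.orbit (Subgroup.closure ({s₁, s₂} : Set (Equiv.Perm Ω))) Φ₀ : Set Ω))
    (A B : Set Ω)
    (hA : ∃ a, A = MulAction.orbit G a) (hB : ∃ b, B = MulAction.orbit G b)
    (hAB : A ≠ B)
    (hcover : O ⊆ A ∪ B) (hOA : (O ∩ A).Nonempty) (hOB : (O ∩ B).Nonempty)
    -- s₁ fixes both A∩O and B∩O setwise:
    (h1A : ∀ Φ ∈ O ∩ A, s₁ Φ ∈ A) (h1B : ∀ Φ ∈ O ∩ B, s₁ Φ ∈ B)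
    -- s₂ exchanges A∩O and B∩O:
    (h2A : ∀ Φ ∈ O ∩ A, s₂ Φ ∈ B) (h2B : ∀ Φ ∈ O ∩ B, s₂ Φ ∈ A) :
    (∀ Φ ∈ A ∩ O, s₁ Φ ∈ A ∧ s₂ Φ ∈ B) ∧ 4 ∣ Nat.card O :=
  stmt_13_general Ω s₁ s₂ h1inv h2inv h1f G Φ₀ O hO A B hA hB hAB hcover h1A h2A h2B
end
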